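/- Let f(x) = B(x,x) + Lx + c be a quadratic vector field on ℝ^N and h ∈ ℝ. If x, x̃ ∈ ℝ^N satisfy the Kahan relation (x̃ − x)/h = B(x, x̃) + (1/2)L(x + x̃) + c and the matrix I + (h/2)f'(x̃) is invertible, then x = x̃ − h (I + (h/2)f'(x̃))^{-1} f(x̃); in other words, the inverse of Kahan's map is given explicitly by this formula. -/

import Mathlib

/-!
Expanding `(I + (h/2) f'(x̃)) (x̃ - x) = (x̃ - x) + h B(x̃, x̃ - x) + (h/2) L(x̃ - x)` and using
the symmetry of `B`, this differs from `h f(x̃)` by exactly the defect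
`(x̃ - x) - h (B(x, x̃) + (1/2) L(x + x̃) + c)` of the Kahan relation. So the relation holds
iff `(I + (h/2) f'(x̃)) (x̃ - x) = h f(x̃)`, and inverting the matrix recovers `x` from `x̃`.
-/

section

variable {𝕜 V : Type*} [Field 𝕜] [NeZero (2 : 𝕜)] [AddCommGroup V] [Module 𝕜 V]

theorem kahan_relation_iff (B : V →ₗ[𝕜] V →ₗ[𝕜] V) (hB : ∀ u v, B u v = B v u)
    (L : V →ₗ[𝕜] V) (c : V) (h : 𝕜) (x xt : V) :
    xt - x = h • (B x xt + (1 / 2 : 𝕜) • L (x + xt) + c) ↔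
      (LinearMap.id + (h / 2) • ((2 : 𝕜) • B xt + L) : V →ₗ[𝕜] V) (xt - x) =
        h • (B xt xt + L xt + c) := by
  have defect :
      (LinearMap.id + (h / 2) • ((2 : 𝕜) • B xt + L) : V →ₗ[𝕜] V) (xt - x) -
        h • (B xt xt + L xt + c) =
        (xt - x) - h • (B x xt + (1 / 2 : 𝕜) • L (x + xt) + c) := by
    simp only [LinearMap.add_apply, LinearMap.smul_apply, LinearMap.id_apply, map_sub, map_add,
      smul_add, smul_smul, hB xt x]
    match_scalars <;> field_simp <;> ring
  rw [← sub_eq_zero, ← defect, sub_eq_zero]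

end

theorem kahan_inverse_explicit_general (N : ℕ) (h : ℝ)
    (B : (Fin N → ℝ) →ₗ[ℝ] (Fin N → ℝ) →ₗ[ℝ] (Fin N → ℝ))
    (hB : ∀ u v, B u v = B v u)
    (L : (Fin N → ℝ) →ₗ[ℝ] (Fin N → ℝ)) (c : Fin N → ℝ)
    (f : (Fin N → ℝ) → (Fin N → ℝ)) (hf : ∀ x, f x = B x x + L x + c)
    (x xt : Fin N → ℝ)
    (hrel : xt - x = h • (B x xt + (1 / 2 : ℝ) • L (x + xt) + c))
    (Minv : (Fin N → ℝ) →ₗ[ℝ] (Fin N → ℝ))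
    (hM1 : Minv ∘ₗ (LinearMap.id + (h / 2) • ((2 : ℝ) • B xt + L)) = LinearMap.id) :
    x = xt - h • Minv (f xt) := by
  have hstep := (kahan_relation_iff B hB L c h x xt).mp hrel
  have hdiff : xt - x = h • Minv (f xt) := by
    rw [hf, ← map_smul, ← hstep, ← LinearMap.comp_apply, hM1, LinearMap.id_apply]
  rw [← hdiff, sub_sub_cancel]

/-- If `x, x̃` satisfy the Kahan relation for the quadratic vector field
`f x = B x x + L x + c` and the matrix `I + (h/2) f'(x̃)` is invertible
(with two-sided inverse `Minv`), then `x = x̃ - h Minv (f x̃)`: the inverse of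
Kahan's map is given explicitly by this formula. -/
theorem kahan_inverse_explicit (N : ℕ) (h : ℝ)
    (B : (Fin N → ℝ) →ₗ[ℝ] (Fin N → ℝ) →ₗ[ℝ] (Fin N → ℝ))
    (hB : ∀ u v, B u v = B v u)
    (L : (Fin N → ℝ) →ₗ[ℝ] (Fin N → ℝ)) (c : Fin N → ℝ)
    (f : (Fin N → ℝ) → (Fin N → ℝ)) (hf : ∀ x, f x = B x x + L x + c)
    (x xt : Fin N → ℝ)
    (hrel : xt - x = h • (B x xt + (1 / 2 : ℝ) • L (x + xt) + c))
    (Minv : (Fin N → ℝ) →ₗ[ℝ] (Fin N → ℝ))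
    (hM1 : Minv ∘ₗ (LinearMap.id + (h / 2) • ((2 : ℝ) • B xt + L)) = LinearMap.id)
    (hM2 : (LinearMap.id + (h / 2) • ((2 : ℝ) • B xt + L)) ∘ₗ Minv = LinearMap.id) :
    x = xt - h • Minv (f xt) :=
  kahan_inverse_explicit_general N h B hB L c f hf x xt hrel Minv hM1
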